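/- Consider the time-dependent rates γ₁(t) = γ₂(t) = 1 and γ₃(t) = −tanh t. For every t ≥ 0 one has γᵢ(t) + γⱼ(t) ≥ 0 for all distinct i, j ∈ {1,2,3} (the P-divisibility conditions), yet γ₁(t) + 2γ₃(t) = 1 − 2·tanh t < 0 whenever t > artanh(1/2), so the KS-divisibility conditions γᵢ(t) + 2γⱼ(t) ≥ 0 fail for such t. By contrast, the modified rates γ₁(t) = γ₂(t) = 1, γ₃(t) = −½·tanh t satisfy γᵢ(t) + 2γⱼ(t) ≥ 0 for all distinct i, j ∈ {1,2,3} and all t ≥ 0. -/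
import Mathlib


/-- The inverse hyperbolic tangent, `artanh x = ½ log((1 + x)/(1 − x))`. -/
noncomputable def artanh (x : ℝ) : ℝ := (1 / 2) * Real.log ((1 + x) / (1 - x))

lemma tanh_formula (x : ℝ) :
    Real.tanh x = (Real.exp (2*x) - 1) / (Real.exp (2*x) + 1) := by
  have hx := Real.exp_pos x
  rw [Real.tanh_eq_sinh_div_cosh, Real.sinh_eq, Real.cosh_eq, Real.exp_neg,
    two_mul, Real.exp_add]
  field_simp

lemma tanh_nonneg' {t : ℝ} (ht : 0 ≤ t) : 0 ≤ Real.tanh t := by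
  rw [tanh_formula]
  have h1 : (1:ℝ) ≤ Real.exp (2*t) := Real.one_le_exp (by linarith)
  have h2 : (0:ℝ) < Real.exp (2*t) + 1 := by positivity
  exact div_nonneg (by linarith) h2.le

lemma tanh_le_one' (t : ℝ) : Real.tanh t ≤ 1 := by
  rw [tanh_formula]
  have h2 : (0:ℝ) < Real.exp (2*t) + 1 := by positivity
  rw [div_le_one h2]; linarith

lemma half_lt_tanh {t : ℝ} (ht : artanh (1 / 2) < t) : 1 / 2 < Real.tanh t := by
  have h3 : Real.exp (2 * t) > 3 := by
    have : artanh (1/2) = (1/2) * Real.log 3 := by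
      unfold artanh; norm_num
    rw [this] at ht
    have : Real.log 3 < 2 * t := by linarith
    calc (3:ℝ) = Real.exp (Real.log 3) := (Real.exp_log (by norm_num)).symm
    _ < Real.exp (2*t) := Real.exp_lt_exp.mpr this
  rw [tanh_formula]
  rw [lt_div_iff₀ (by positivity)]
  linarith

/-- the rates `γ₁ = γ₂ = 1`, `γ₃(t) = −tanh t` satisfy the
P-divisibility conditions `γᵢ + γⱼ ≥ 0` (`i ≠ j`) for all `t ≥ 0`, but
`γ₁ + 2γ₃ = 1 − 2 tanh t < 0` whenever `t > artanh (1/2)`, so the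
KS-divisibility conditions fail there; by contrast the modified rates
`γ₁ = γ₂ = 1`, `γ₃(t) = −½ tanh t` satisfy `γᵢ + 2γⱼ ≥ 0` for all distinct
`i, j` and all `t ≥ 0`. -/
theorem stmt_16 :
    (∀ t : ℝ, 0 ≤ t → ∀ i j : Fin 3, i ≠ j →
      0 ≤ ![1, 1, -Real.tanh t] i + ![1, 1, -Real.tanh t] j) ∧
    (∀ t : ℝ, artanh (1 / 2) < t → 1 + 2 * (-Real.tanh t) < 0) ∧
    (∀ t : ℝ, 0 ≤ t → ∀ i j : Fin 3, i ≠ j →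
      0 ≤ ![1, 1, -(1 / 2) * Real.tanh t] i
        + 2 * ![1, 1, -(1 / 2) * Real.tanh t] j) := by
  refine ⟨?_, ?_, ?_⟩
  · intro t ht i j hij
    have h1 := tanh_nonneg' ht
    have h2 := tanh_le_one' t
    fin_cases i <;> fin_cases j <;> simp_all <;> linarith
  · intro t ht
    have := half_lt_tanh ht
    linarith
  · intro t ht i j hij
    have h1 := tanh_nonneg' ht
    have h2 := tanh_le_one' t
    fin_cases i <;> fin_cases j <;> simp_all <;> linarith
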